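/- Let φ : S² → ℝ be continuous and even, and let θ = (θ₁, θ₂, θ₃) ∈ S² with θ' = (θ₁, θ₂) ≠ 0. Define the orthonormal vectors û = (−θ₂, θ₁, 0)/|θ'| and v̂ = (θ₁θ₃, θ₂θ₃, −|θ'|²)/|θ'| in ℝ³, and set u' = (−θ₂, θ₁)/|θ'| ∈ ℝ², v' = (θ₁θ₃, θ₂θ₃)/|θ'| ∈ ℝ², v₃ = −|θ'|. Define Φ : ℝ² → ℝ by Φ(x₁,x₂) = 2·φ((x₁,x₂,1)/√(1+x₁²+x₂²)) / (1+x₁²+x₂²). Then ∫₀^{2π} φ(û·cos t + v̂·sin t) dt = v₃^{−2} · ∫_ℝ Φ( (u'/v₃)·τ + v'/v₃ ) dτ. -/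

import Mathlib

open MeasureTheory Filter Real
open scoped Topology RealInnerProductSpace

noncomputable section

abbrev E3 := EuclideanSpace ℝ (Fin 3)
abbrev E2 := EuclideanSpace ℝ (Fin 2)

def vec3 (a b c : ℝ) : E3 := (WithLp.equiv 2 (Fin 3 → ℝ)).symm ![a, b, c]
def vec2 (a b : ℝ) : E2 := (WithLp.equiv 2 (Fin 2 → ℝ)).symm ![a, b]

/-- The great circle of the unit sphere in `ℝ³` orthogonal to `θ`. -/
def circleSet (θ : E3) : Set E3 := {α | α ∈ Metric.sphere (0:E3) 1 ∧ ⟪θ, α⟫ = 0}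

/-- The Minkowski–Funk transform: integral over the great circle orthogonal to `θ`
with respect to one-dimensional Hausdorff (arc-length) measure. -/
def funkT (φ : E3 → ℝ) (θ : E3) : ℝ := ∫ α in circleSet θ, φ α ∂μH[1]

/-- The spherical Radon transform with centers on the sphere of radius `r`. -/
def sphRadon (r : ℝ) (f : E3 → ℝ) (α : E3) (t : ℝ) : ℝ :=
  ∫ β in Metric.sphere (0:E3) 1, f (r • α + t • β) ∂μH[2]

/-- The transform `R_P` arising in PAT with circular integrating detectors. -/
def RP (r : ℝ) (f : E3 → ℝ) (θ : E3) (t : ℝ) : ℝ :=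
  ∫ α in circleSet θ, (∫ β in Metric.sphere (0:E3) 1, f (r • α + t • β) ∂μH[2]) ∂μH[1]

/-- Rotation of a vector in `ℝ²` by `π/2`. -/
def perp (ω : E2) : E2 := vec2 (-(ω 1)) (ω 0)

/-- The two-dimensional Radon transform. -/
def radon2 (Φ : E2 → ℝ) (ω : E2) (s : ℝ) : ℝ := ∫ ν : ℝ, Φ (s • ω + ν • perp ω)

/-- Principal value of `∫ F`, where the singular set is removed via `{s | ε < |e s|}`:
the limit as `ε → 0⁺` of the integrals over `{s | |e s| > ε}`. -/
def pv (F : ℝ → ℝ) (e : ℝ → ℝ) : ℝ :=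
  limUnder (𝓝[>] (0:ℝ)) (fun ε => ∫ s in {s | ε < |e s|}, F s)

/-- The Hilbert transform `Hu(s) = (1/π) p.v. ∫ u(s')/(s-s') ds'`. -/
def hilbertT (u : ℝ → ℝ) (s : ℝ) : ℝ :=
  (1/π) * pv (fun s' => u s' / (s - s')) (fun s' => s - s')

/-- The backprojection operator `R#u(x) = ∫_{S¹} u(ω, x·ω) dS(ω)`. -/
def backproj (u : E2 → ℝ → ℝ) (x : E2) : ℝ :=
  ∫ ω in Metric.sphere (0:E2) 1, u ω ⟪x, ω⟫ ∂μH[1]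

/-! Since `φ` is even and `t ↦ cos t • û + sin t • v̂` is antipodal after half a turn, the integral over
`[0, 2π]` is twice the integral over `[0, π]`. The substitution `t = π/2 - arctan τ` turns the
half circle into the line `τ ↦ (τ • û + v̂) / √(1 + τ²)`, and since `û₃ = 0`, `v̂₃ = v₃ < 0`, central
projection onto the plane `x₃ = 1` sends the point `τ • û + v̂` to `((τ u' + v') / v₃, 1)`; the
factor `2 / (1 + |x|²)` in `Φ` is `2 v₃² / (1 + τ²)`, which absorbs the Jacobian `1 / (1 + τ²)`. -/

@[simp] lemma vec3_apply_zero (a b c : ℝ) : vec3 a b c 0 = a := rfl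
@[simp] lemma vec3_apply_one (a b c : ℝ) : vec3 a b c 1 = b := rfl
@[simp] lemma vec3_apply_two (a b c : ℝ) : vec3 a b c 2 = c := rfl
@[simp] lemma vec2_apply_zero (a b : ℝ) : vec2 a b 0 = a := rfl
@[simp] lemma vec2_apply_one (a b : ℝ) : vec2 a b 1 = b := rfl

lemma sq_norm_vec2 (a b : ℝ) : ‖vec2 a b‖ ^ 2 = a ^ 2 + b ^ 2 := by
  simp [EuclideanSpace.norm_sq_eq, Fin.sum_univ_two]

lemma norm_sq_E3_eq (p : E3) : ‖p‖ ^ 2 = p 0 ^ 2 + p 1 ^ 2 + p 2 ^ 2 := by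
  simp [EuclideanSpace.norm_sq_eq, Fin.sum_univ_three]

lemma intervalIntegral_zero_pi_eq_integral_arctan (g : ℝ → ℝ) :
    ∫ t in (0:ℝ)..π, g t = ∫ τ : ℝ, g (π / 2 - arctan τ) / (1 + τ ^ 2) := by
  have hcov := integral_image_eq_integral_abs_deriv_smul MeasurableSet.univ
    (fun τ _ => (hasDerivAt_arctan τ).hasDerivWithinAt) arctan_injective.injOn
    (fun s => g (π / 2 - s))
  rw [Set.image_univ, range_arctan, Measure.restrict_univ] at hcov
  rw [← integral_Ioc_eq_integral_Ioo, ← intervalIntegral.integral_of_le (by linarith [pi_pos])]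
    at hcov
  rw [intervalIntegral.integral_comp_sub_left g (π / 2)] at hcov
  convert hcov using 1
  · norm_num
  · refine integral_congr_ae (Eventually.of_forall fun τ => ?_)
    simp only [smul_eq_mul, abs_of_pos (by positivity : (0:ℝ) < 1 / (1 + τ ^ 2))]
    ring

section GreatCircle

variable {F : Type*} [NormedAddCommGroup F] [InnerProductSpace ℝ F]

def circleParam (u v : F) (t : ℝ) : F := cos t • u + sin t • v

lemma continuous_circleParam (u v : F) : Continuous (circleParam u v) := by
  unfold circleParam; fun_prop

lemma circleParam_add_pi (u v : F) (t : ℝ) : circleParam u v (t + π) = -circleParam u v t := by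
  simp only [circleParam, cos_add_pi, sin_add_pi, neg_smul, neg_add]

lemma circleParam_pi_div_two_sub_arctan (u v : F) (τ : ℝ) :
    circleParam u v (π / 2 - arctan τ) = (√(1 + τ ^ 2))⁻¹ • (τ • u + v) := by
  simp only [circleParam, cos_pi_div_two_sub, sin_pi_div_two_sub, sin_arctan, cos_arctan,
    smul_add, smul_smul]
  congr 2 <;> field_simp

variable {u v : F}

lemma norm_circleParam (hu : ‖u‖ = 1) (hv : ‖v‖ = 1) (huv : ⟪u, v⟫ = 0) (t : ℝ) :
    ‖circleParam u v t‖ = 1 := by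
  have h : ‖circleParam u v t‖ ^ 2 = 1 := by
    rw [circleParam, norm_add_sq_real, real_inner_smul_left, real_inner_smul_right, huv,
      norm_smul, norm_smul, hu, hv]
    simp [cos_sq_add_sin_sq]
  rwa [pow_eq_one_iff_of_nonneg (norm_nonneg _) two_ne_zero] at h

lemma norm_smul_add_of_orthonormal (hu : ‖u‖ = 1) (hv : ‖v‖ = 1) (huv : ⟪u, v⟫ = 0) (τ : ℝ) :
    ‖τ • u + v‖ = √(1 + τ ^ 2) := by
  rw [← sqrt_sq (norm_nonneg _), norm_add_sq_real, real_inner_smul_left, huv, norm_smul, hu, hv]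
  simp [add_comm]

lemma integral_circleParam_eq_two_mul_integral_line {φ : F → ℝ}
    (hc : ContinuousOn φ (Metric.sphere 0 1)) (he : ∀ α ∈ Metric.sphere (0:F) 1, φ α = φ (-α))
    (hu : ‖u‖ = 1) (hv : ‖v‖ = 1) (huv : ⟪u, v⟫ = 0) :
    ∫ t in (0:ℝ)..(2 * π), φ (circleParam u v t)
      = 2 * ∫ τ : ℝ, φ ((√(1 + τ ^ 2))⁻¹ • (τ • u + v)) / (1 + τ ^ 2) := by
  have hmem : ∀ t, circleParam u v t ∈ Metric.sphere (0:F) 1 := fun t => by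
    simpa using norm_circleParam hu hv huv t
  have hcont : Continuous fun t => φ (circleParam u v t) :=
    hc.comp_continuous (continuous_circleParam u v) hmem
  have hper : Function.Periodic (fun t => φ (circleParam u v t)) π := fun t => by
    simp only [circleParam_add_pi, ← he _ (hmem t)]
  have hfold := hper.intervalIntegral_add_eq_add 0 π fun _ _ => hcont.intervalIntegrable _ _
  rw [zero_add, ← two_mul] at hfold
  rw [hfold, ← two_mul, intervalIntegral_zero_pi_eq_integral_arctan]
  simp only [circleParam_pi_div_two_sub_arctan]

end GreatCircle

def gnomonic (p : E3) : E2 := vec2 (p 0 / p 2) (p 1 / p 2)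

lemma one_add_sq_div_add_sq_div (p : E3) (hp : p 2 ≠ 0) :
    1 + (p 0 / p 2) ^ 2 + (p 1 / p 2) ^ 2 = ‖p‖ ^ 2 / p 2 ^ 2 := by
  rw [norm_sq_E3_eq]; field_simp; ring

-- Central projection back to the sphere; `p 2 < 0` makes it land at the antipode of `p / ‖p‖`.
lemma inv_sqrt_smul_vec3_div (p : E3) (hp : p 2 < 0) :
    (√(1 + (p 0 / p 2) ^ 2 + (p 1 / p 2) ^ 2))⁻¹ • vec3 (p 0 / p 2) (p 1 / p 2) 1
      = -(‖p‖⁻¹ • p) := by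
  have hp0 : p 2 ≠ 0 := hp.ne
  have hpos : 0 < ‖p‖ := norm_pos_iff.mpr fun h => hp0 (by simp [h])
  rw [one_add_sq_div_add_sq_div p hp0, sqrt_div' _ (sq_nonneg _), sqrt_sq hpos.le,
    sqrt_sq_eq_abs, abs_of_neg hp]
  ext i
  fin_cases i <;> simp <;> field_simp

lemma gnomonic_pullback_eq {φ : E3 → ℝ} (he : ∀ α ∈ Metric.sphere (0:E3) 1, φ α = φ (-α))
    (p : E3) (hp : p 2 < 0) :
    2 * φ ((√(1 + (p 0 / p 2) ^ 2 + (p 1 / p 2) ^ 2))⁻¹ • vec3 (p 0 / p 2) (p 1 / p 2) 1)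
        / (1 + (p 0 / p 2) ^ 2 + (p 1 / p 2) ^ 2)
      = 2 * p 2 ^ 2 * (φ (‖p‖⁻¹ • p) / ‖p‖ ^ 2) := by
  have hpos : 0 < ‖p‖ := norm_pos_iff.mpr fun h => hp.ne (by simp [h])
  rw [inv_sqrt_smul_vec3_div p hp, ← he _ (by simp [norm_smul, hpos.ne']),
    one_add_sq_div_add_sq_div p hp.ne]
  field_simp

section Frame

variable {θ : E3}

def frameU (θ : E3) : E3 := ‖vec2 (θ 0) (θ 1)‖⁻¹ • vec3 (-(θ 1)) (θ 0) 0

def frameV (θ : E3) : E3 :=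
  ‖vec2 (θ 0) (θ 1)‖⁻¹ • vec3 (θ 0 * θ 2) (θ 1 * θ 2) (-‖vec2 (θ 0) (θ 1)‖ ^ 2)

lemma norm_frameU (hθ' : vec2 (θ 0) (θ 1) ≠ 0) : ‖frameU θ‖ = 1 := by
  have hr0 : ‖vec2 (θ 0) (θ 1)‖ ≠ 0 := norm_ne_zero_iff.mpr hθ'
  have hr2 := sq_norm_vec2 (θ 0) (θ 1)
  rw [← pow_eq_one_iff_of_nonneg (norm_nonneg _) two_ne_zero, norm_sq_E3_eq]
  simp only [frameU, PiLp.smul_apply, vec3_apply_zero, vec3_apply_one, vec3_apply_two, smul_eq_mul]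
  field_simp
  linear_combination -hr2

lemma norm_frameV (hθ : θ ∈ Metric.sphere (0:E3) 1) (hθ' : vec2 (θ 0) (θ 1) ≠ 0) :
    ‖frameV θ‖ = 1 := by
  have hr0 : ‖vec2 (θ 0) (θ 1)‖ ≠ 0 := norm_ne_zero_iff.mpr hθ'
  have hr2 := sq_norm_vec2 (θ 0) (θ 1)
  have hθ1 : θ 0 ^ 2 + θ 1 ^ 2 + θ 2 ^ 2 = 1 := by
    rw [← norm_sq_E3_eq, mem_sphere_zero_iff_norm.mp hθ, one_pow]
  rw [← pow_eq_one_iff_of_nonneg (norm_nonneg _) two_ne_zero, norm_sq_E3_eq]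
  simp only [frameV, PiLp.smul_apply, vec3_apply_zero, vec3_apply_one, vec3_apply_two, smul_eq_mul]
  field_simp
  linear_combination (‖vec2 (θ 0) (θ 1)‖ ^ 2 - θ 2 ^ 2) * hr2 + ‖vec2 (θ 0) (θ 1)‖ ^ 2 * hθ1

lemma inner_frameU_frameV (θ : E3) : ⟪frameU θ, frameV θ⟫ = 0 := by
  simp [frameU, frameV, PiLp.inner_apply, Fin.sum_univ_three]
  ring

lemma smul_frameU_add_frameV_apply_two (hθ' : vec2 (θ 0) (θ 1) ≠ 0) (τ : ℝ) :
    (τ • frameU θ + frameV θ) 2 = -‖vec2 (θ 0) (θ 1)‖ := by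
  have hr0 : ‖vec2 (θ 0) (θ 1)‖ ≠ 0 := norm_ne_zero_iff.mpr hθ'
  simp [frameU, frameV]
  field_simp

lemma gnomonic_smul_frameU_add_frameV (hθ' : vec2 (θ 0) (θ 1) ≠ 0) (τ : ℝ) :
    gnomonic (τ • frameU θ + frameV θ)
      = (τ / -‖vec2 (θ 0) (θ 1)‖) • (‖vec2 (θ 0) (θ 1)‖⁻¹ • vec2 (-(θ 1)) (θ 0)) +
          (-‖vec2 (θ 0) (θ 1)‖)⁻¹ • (‖vec2 (θ 0) (θ 1)‖⁻¹ • vec2 (θ 0 * θ 2) (θ 1 * θ 2)) := by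
  have hr0 : ‖vec2 (θ 0) (θ 1)‖ ≠ 0 := norm_ne_zero_iff.mpr hθ'
  rw [gnomonic, smul_frameU_add_frameV_apply_two hθ']
  ext i
  fin_cases i <;> simp [frameU, frameV] <;> field_simp <;> ring

end Frame

/-- parametrized great-circle integral of `φ` equals a line integral of `Φ`. -/
theorem stmt15 (φ : E3 → ℝ) (hc : ContinuousOn φ (Metric.sphere 0 1))
    (he : ∀ α ∈ Metric.sphere (0:E3) 1, φ α = φ (-α))
    (θ : E3) (hθ : θ ∈ Metric.sphere (0:E3) 1) (hθ' : vec2 (θ 0) (θ 1) ≠ 0)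
    (Φ : E2 → ℝ)
    (hΦ : ∀ x : E2, Φ x =
      2 * φ ((Real.sqrt (1 + (x 0)^2 + (x 1)^2))⁻¹ • vec3 (x 0) (x 1) 1)
        / (1 + (x 0)^2 + (x 1)^2)) :
    (∫ t in (0:ℝ)..(2*π),
      φ (Real.cos t • (‖vec2 (θ 0) (θ 1)‖⁻¹ • vec3 (-(θ 1)) (θ 0) 0) +
         Real.sin t • (‖vec2 (θ 0) (θ 1)‖⁻¹ •
           vec3 (θ 0 * θ 2) (θ 1 * θ 2) (-‖vec2 (θ 0) (θ 1)‖^2))))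
      = ((-‖vec2 (θ 0) (θ 1)‖)^2)⁻¹ *
        ∫ τ : ℝ, Φ ((τ / -‖vec2 (θ 0) (θ 1)‖) • (‖vec2 (θ 0) (θ 1)‖⁻¹ • vec2 (-(θ 1)) (θ 0)) +
          (-‖vec2 (θ 0) (θ 1)‖)⁻¹ • (‖vec2 (θ 0) (θ 1)‖⁻¹ • vec2 (θ 0 * θ 2) (θ 1 * θ 2))) := by
  set r := ‖vec2 (θ 0) (θ 1)‖
  have hr0 : 0 < r := norm_pos_iff.mpr hθ'
  have hu := norm_frameU hθ'
  have hv := norm_frameV hθ hθ'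
  have huv := inner_frameU_frameV θ
  have hΦline : ∀ τ : ℝ,
      Φ ((τ / -r) • (r⁻¹ • vec2 (-(θ 1)) (θ 0)) + (-r)⁻¹ • (r⁻¹ • vec2 (θ 0 * θ 2) (θ 1 * θ 2)))
        = 2 * r ^ 2 * (φ ((√(1 + τ ^ 2))⁻¹ • (τ • frameU θ + frameV θ)) / (1 + τ ^ 2)) := by
    intro τ
    have hp2 := smul_frameU_add_frameV_apply_two hθ' τ
    rw [← gnomonic_smul_frameU_add_frameV hθ', hΦ, gnomonic, vec2_apply_zero, vec2_apply_one,
      gnomonic_pullback_eq he _ (by linarith), norm_smul_add_of_orthonormal hu hv huv, hp2,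
      sq_sqrt (by positivity)]
    ring
  calc _ = 2 * ∫ τ : ℝ, φ ((√(1 + τ ^ 2))⁻¹ • (τ • frameU θ + frameV θ)) / (1 + τ ^ 2) :=
        integral_circleParam_eq_two_mul_integral_line hc he hu hv huv
    _ = _ := by
      simp_rw [hΦline, integral_const_mul]
      field_simp
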